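/- arXiv:2512.01520 — 2 statements merged into one kernel-verified Lean document; each statement's English description precedes it below -/
import Mathlib

section
/- Let R be a unique factorization domain with a ring automorphism σ, and let z ∈ R be irreducible such that σ^m(z) and σ^n(z) are not associates whenever m ≠ n. Let p, q ∈ R be nonzero, and for k ∈ ℤ let p̄(k) (respectively q̄(k)) denote the multiplicity of σ^k(z) as an irreducible factor of p (respectively of q), i.e. the largest e ≥ 0 such that σ^k(z)^e divides p (resp. q). Let ḡ : ℤ → ℕ be a finitely supported function and set g = ∏_{k ∈ ℤ} σ^k(z)^{ḡ(k)}. Then the principal ideal ⟨g⟩ is (p,q)-invariant if and only if for every k ∈ ℤ one has ḡ(k) − ḡ(k+1) ≤ p̄(k) and ḡ(k) − ḡ(k−1) ≤ q̄(k) (inequalities in ℤ). -/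
/-!
Write `ν_k` for the multiplicity of the prime `σ^k(z)`. As the `σ^k(z)` are pairwise
non-associated primes, `g = ∏ σ^k(z)^{ḡ(k)}` divides `x` iff `ḡ(k) ≤ ν_k(x)` for all `k`.
Since `σ^m` shifts the orbit, `ν_k(σ^m(g)) = ḡ(k - m)`, and `ν_k` is additive, so
`g ∣ σ^m(g)·a` iff `ḡ(k) ≤ ḡ(k - m) + ν_k(a)` for all `k`. Invariance of `⟨g⟩` amounts to
`g ∣ σ⁻¹(g)·p` and `g ∣ σ(g)·q`, i.e. the cases `m = -1` and `m = 1`.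
-/

def PQInvariant {R : Type*} [CommRing R] (σ : R ≃+* R) (p q : R) (I : Ideal R) : Prop :=
  ∀ i ∈ I, σ⁻¹ i * p ∈ I ∧ σ i * q ∈ I

open Function

section

variable {α ι : Type*}

theorem finprod_pow_eq_prod_toFinset [CommMonoid α] (P : ι → α) {e : ι → ℕ}
    (he : (support e).Finite) : ∏ᶠ j, P j ^ e j = ∏ j ∈ he.toFinset, P j ^ e j :=
  finprod_eq_prod_of_mulSupport_subset _ fun j hj => by
    simpa using fun h0 : e j = 0 => hj (by simp [h0])

section Primes

variable [CommMonoidWithZero α] [IsCancelMulZero α]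

theorem emultiplicity_eq_zero_of_not_associated {p q : α} (hp : Prime p) (hq : Prime q)
    (h : ¬ Associated p q) : emultiplicity p q = 0 :=
  emultiplicity_eq_zero.2 fun hdvd => h (hp.associated_of_dvd hq hdvd)

variable {P : ι → α}

theorem emultiplicity_finprod_pow (hP : ∀ i, Prime (P i))
    (hPa : Pairwise fun i j => ¬ Associated (P i) (P j)) {e : ι → ℕ} (he : (support e).Finite)
    (i : ι) : emultiplicity (P i) (∏ᶠ j, P j ^ e j) = e i := by
  rw [finprod_pow_eq_prod_toFinset P he, Finset.emultiplicity_prod (hP i), Finset.sum_eq_single i]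
  · exact emultiplicity_pow_self_of_prime (hP i) _
  · intro j _ hji
    rw [emultiplicity_pow (hP i),
      emultiplicity_eq_zero_of_not_associated (hP i) (hP j) (hPa hji.symm), mul_zero]
  · intro hi
    simp [show e i = 0 by simpa using hi, emultiplicity_of_one_right (hP i).not_isUnit]

theorem finprod_pow_dvd_iff [DecompositionMonoid α] (hP : ∀ i, Prime (P i))
    (hPa : Pairwise fun i j => ¬ Associated (P i) (P j)) {e : ι → ℕ} (he : (support e).Finite)
    {x : α} : ∏ᶠ j, P j ^ e j ∣ x ↔ ∀ i, (e i : ℕ∞) ≤ emultiplicity (P i) x := by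
  simp only [← pow_dvd_iff_le_emultiplicity, finprod_pow_eq_prod_toFinset P he]
  refine ⟨fun h i => ?_, fun h => Finset.prod_dvd_of_isRelPrime ?_ fun i _ => h i⟩
  · by_cases hi : i ∈ he.toFinset
    · exact (Finset.dvd_prod_of_mem _ hi).trans h
    · simp [show e i = 0 by simpa using hi]
  · intro i _ j _ hij
    exact (((hP i).irreducible.isRelPrime_iff_not_dvd).2
      fun hdvd => hPa hij ((hP i).associated_of_dvd (hP j) hdvd)).pow

end Primes

end

section Automorphism

variable {R : Type*} [CommRing R] (σ : R ≃+* R)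

theorem pqInvariant_span_singleton_iff {p q g : R} :
    PQInvariant σ p q (Ideal.span {g}) ↔ g ∣ σ⁻¹ g * p ∧ g ∣ σ g * q := by
  simp only [PQInvariant, Ideal.mem_span_singleton]
  refine ⟨fun h => h g dvd_rfl, fun ⟨hgp, hgq⟩ i ⟨c, hc⟩ => ?_⟩
  subst hc
  simp only [map_mul]
  exact ⟨hgp.trans ⟨σ⁻¹ c, by ring⟩, hgq.trans ⟨σ c, by ring⟩⟩

theorem emultiplicity_zpow_apply_zpow_apply (z x : R) (k m : ℤ) :
    emultiplicity ((σ ^ k) z) ((σ ^ m) x) = emultiplicity ((σ ^ (k - m)) z) x := by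
  have : (σ ^ k) z = (σ ^ m) ((σ ^ (k - m)) z) := by
    rw [← RingAut.mul_apply, ← zpow_add, add_sub_cancel]
  rw [this, emultiplicity_map_eq]

theorem finprod_orbit_dvd_zpow_apply_mul_iff [IsDomain R] [DecompositionMonoid R] {z : R}
    (hz : Irreducible z) (horb : Pairwise fun m n : ℤ => ¬ Associated ((σ ^ m) z) ((σ ^ n) z))
    {e : ℤ → ℕ} (he : (support e).Finite) {a : R} {abar : ℤ → ℕ}
    (ha : ∀ k, emultiplicity ((σ ^ k) z) a = abar k) (m : ℤ) :
    ∏ᶠ k, (σ ^ k) z ^ e k ∣ (σ ^ m) (∏ᶠ k, (σ ^ k) z ^ e k) * a ↔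
      ∀ k, (e k : ℤ) - e (k - m) ≤ abar k := by
  have hP : ∀ k : ℤ, Prime ((σ ^ k) z) := fun k => (hz.map (σ ^ k)).prime
  rw [finprod_pow_dvd_iff hP horb he]
  refine forall_congr' fun k => ?_
  rw [emultiplicity_mul (hP k), emultiplicity_zpow_apply_zpow_apply,
    emultiplicity_finprod_pow hP horb he, ha, ← Nat.cast_add, Nat.cast_le]
  omega

end Automorphism

theorem stmt_7_general {R : Type*} [CommRing R] [IsDomain R] [UniqueFactorizationMonoid R]
    (σ : R ≃+* R) (z : R) (hz : Irreducible z)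
    (horb : ∀ m n : ℤ, m ≠ n → ¬ Associated ((σ ^ m) z) ((σ ^ n) z))
    (p q : R)
    (pbar qbar : ℤ → ℕ)
    (hpbar : ∀ k : ℤ, ((σ ^ k) z) ^ pbar k ∣ p ∧ ¬ ((σ ^ k) z) ^ (pbar k + 1) ∣ p)
    (hqbar : ∀ k : ℤ, ((σ ^ k) z) ^ qbar k ∣ q ∧ ¬ ((σ ^ k) z) ^ (qbar k + 1) ∣ q)
    (gbar : ℤ → ℕ) (hgbar : {k : ℤ | gbar k ≠ 0}.Finite)
    (g : R) (hg : g = ∏ᶠ k : ℤ, ((σ ^ k) z) ^ gbar k) :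
    PQInvariant σ p q (Ideal.span {g}) ↔
      ∀ k : ℤ, (gbar k : ℤ) - gbar (k + 1) ≤ pbar k ∧
        (gbar k : ℤ) - gbar (k - 1) ≤ qbar k := by
  have hσ : ⇑σ = ⇑(σ ^ (1 : ℤ)) := by rw [zpow_one]
  rw [pqInvariant_span_singleton_iff, ← zpow_neg_one σ, hσ, hg,
    finprod_orbit_dvd_zpow_apply_mul_iff σ hz horb hgbar fun k => emultiplicity_eq_coe.2 (hpbar k),
    finprod_orbit_dvd_zpow_apply_mul_iff σ hz horb hgbar fun k => emultiplicity_eq_coe.2 (hqbar k),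
    ← forall_and]
  simp only [sub_neg_eq_add]

/-- Let `z` be an irreducible of a UFD `R` whose `σ`-orbit is infinite
(no two distinct `σ`-powers of `z` are associates), let `p̄(k)`, `q̄(k)` record the
multiplicities of `σ^k(z)` in `p`, `q`, let `ḡ : ℤ → ℕ` be finitely supported and
`g = ∏ₖ σ^k(z)^{ḡ(k)}`. Then `⟨g⟩` is `(p,q)`-invariant iff for all `k` one has
`ḡ(k) − ḡ(k+1) ≤ p̄(k)` and `ḡ(k) − ḡ(k−1) ≤ q̄(k)`. -/
theorem stmt_7 {R : Type*} [CommRing R] [IsDomain R] [UniqueFactorizationMonoid R]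
    (σ : R ≃+* R) (z : R) (hz : Irreducible z)
    (horb : ∀ m n : ℤ, m ≠ n → ¬ Associated ((σ ^ m) z) ((σ ^ n) z))
    (p q : R) (hp : p ≠ 0) (hq : q ≠ 0)
    (pbar qbar : ℤ → ℕ)
    (hpbar : ∀ k : ℤ, ((σ ^ k) z) ^ pbar k ∣ p ∧ ¬ ((σ ^ k) z) ^ (pbar k + 1) ∣ p)
    (hqbar : ∀ k : ℤ, ((σ ^ k) z) ^ qbar k ∣ q ∧ ¬ ((σ ^ k) z) ^ (qbar k + 1) ∣ q)
    (gbar : ℤ → ℕ) (hgbar : {k : ℤ | gbar k ≠ 0}.Finite)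
    (g : R) (hg : g = ∏ᶠ k : ℤ, ((σ ^ k) z) ^ gbar k) :
    PQInvariant σ p q (Ideal.span {g}) ↔
      ∀ k : ℤ, (gbar k : ℤ) - gbar (k + 1) ≤ pbar k ∧
        (gbar k : ℤ) - gbar (k - 1) ≤ qbar k :=
  stmt_7_general σ z hz horb p q pbar qbar hpbar hqbar gbar hgbar g hg
end

section
/- Let R be a principal ideal domain with a ring automorphism σ such that for every irreducible z ∈ R and every n ≥ 1, σ^n(z) is not an associate of z, and let p, q ∈ R be nonzero. Then there exists a nonzero (p,q)-invariant ideal J of R that is contained in every nonzero (p,q)-invariant ideal of R. -/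
open Filter Finset UniqueFactorizationMonoid

section CommRing

variable {R : Type*} [CommRing R]

lemma RingAut.inv_apply_apply (σ : R ≃+* R) (x : R) : σ⁻¹ (σ x) = x :=
  σ.symm_apply_apply x

lemma RingAut.apply_inv_apply (σ : R ≃+* R) (x : R) : σ (σ⁻¹ x) = x :=
  σ.apply_symm_apply x

lemma inv_pow_apply_pow_apply (σ : R ≃+* R) (a : ℕ) (x : R) :
    (σ⁻¹ ^ a) ((σ ^ a) x) = x := by
  rw [inv_pow, RingAut.inv_apply, RingEquiv.symm_apply_apply]

lemma inv_pow_apply_pow_add_apply (σ : R ≃+* R) (a k : ℕ) (x : R) :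
    (σ⁻¹ ^ a) ((σ ^ (a + k)) x) = (σ ^ k) x := by
  rw [pow_add, RingAut.mul_apply, inv_pow_apply_pow_apply]

lemma IsCoprime.inv_pow_apply {σ : R ≃+* R} {a k : ℕ} {x y : R}
    (h : IsCoprime x ((σ ^ (a + k)) y)) : IsCoprime ((σ⁻¹ ^ a) x) ((σ ^ k) y) := by
  simpa only [RingEquiv.coe_toRingHom, inv_pow_apply_pow_add_apply] using
    h.map ((σ⁻¹ ^ a : R ≃+* R) : R →+* R)

lemma Ideal.mem_of_isCoprime_of_mul_mem {I : Ideal R} {u v x : R} (huv : IsCoprime u v)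
    (hu : u * x ∈ I) (hv : v * x ∈ I) : x ∈ I := by
  obtain ⟨s, t, hst⟩ := huv
  have hx : x = s * (u * x) + t * (v * x) := by linear_combination (-x) * hst
  rw [hx]
  exact I.add_mem (I.mul_mem_left s hu) (I.mul_mem_left t hv)

lemma Ideal.apply_mul_mem_of_mem_span {S F : Type*} [CommRing S] [FunLike F R S]
    [RingHomClass F R S] (f : F) {s : Set R} {c : S} {K : Ideal S}
    (h : ∀ a ∈ s, f a * c ∈ K) {i : R} (hi : i ∈ Ideal.span s) : f i * c ∈ K := by
  induction hi using Submodule.span_induction with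
  | mem a ha => exact h a ha
  | zero => simp
  | add x y _ _ hx hy => rw [map_add, add_mul]; exact K.add_mem hx hy
  | smul r x _ hx => rw [smul_eq_mul, map_mul, mul_assoc]; exact K.mul_mem_left _ hx

def NoPeriodicIrreducibles (σ : R ≃+* R) : Prop :=
  ∀ z : R, Irreducible z → ∀ n : ℕ, 1 ≤ n → ¬ Associated ((σ ^ n) z) z

lemma NoPeriodicIrreducibles.inv {σ : R ≃+* R} (hσ : NoPeriodicIrreducibles σ) :
    NoPeriodicIrreducibles σ⁻¹ := by
  intro z hz n hn h
  refine hσ _ (hz.map (σ⁻¹ ^ n)) n hn ?_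
  simpa using h.symm

lemma NoPeriodicIrreducibles.subsingleton_dvd {σ : R ≃+* R} (hσ : NoPeriodicIrreducibles σ)
    {a b : R} (ha : Irreducible a) (hb : Irreducible b) :
    {m : ℕ | a ∣ (σ ^ m) b}.Subsingleton := by
  have shift_eq_zero : ∀ m k, a ∣ (σ ^ m) b → a ∣ (σ ^ (m + k)) b → k = 0 := by
    intro m k h h'
    by_contra hk
    have hassoc := ((ha.associated_of_dvd (hb.map _) h').symm.trans
      (ha.associated_of_dvd (hb.map _) h)).map (σ⁻¹ ^ m)
    rw [inv_pow_apply_pow_add_apply, inv_pow_apply_pow_apply] at hassoc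
    exact hσ b hb k (Nat.one_le_iff_ne_zero.2 hk) hassoc
  intro m hm m' hm'
  rcases le_total m m' with h | h
  · obtain ⟨k, rfl⟩ := Nat.exists_eq_add_of_le h
    simp [shift_eq_zero m k hm hm']
  · obtain ⟨k, rfl⟩ := Nat.exists_eq_add_of_le h
    simp [shift_eq_zero m' k hm' hm]

def orbitProd (τ : R ≃+* R) (r : R) (N : ℕ) : R :=
  ∏ k ∈ range (N + 1), (τ ^ k) r

lemma orbitProd_zero (τ : R ≃+* R) (r : R) : orbitProd τ r 0 = r := by
  simp [orbitProd]

lemma orbitProd_succ (τ : R ≃+* R) (r : R) (N : ℕ) :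
    orbitProd τ r (N + 1) = orbitProd τ r N * (τ ^ (N + 1)) r :=
  prod_range_succ _ _

lemma orbitProd_succ' (τ : R ≃+* R) (r : R) (N : ℕ) :
    orbitProd τ r (N + 1) = r * τ (orbitProd τ r N) := by
  simp only [orbitProd, prod_range_succ' _ (N + 1), map_prod, pow_succ', RingAut.mul_apply,
    pow_zero, RingAut.one_apply, mul_comm r]

lemma orbitProd_ne_zero [IsDomain R] (τ : R ≃+* R) {r : R} (hr : r ≠ 0) (N : ℕ) :
    orbitProd τ r N ≠ 0 :=
  prod_ne_zero_iff.2 fun k _ => (τ ^ k).map_ne_zero_iff.2 hr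

lemma pow_apply_mul_orbitProd_mem {τ : R ≃+* R} {r d : R} {I : Ideal R}
    (hI : ∀ i ∈ I, τ i * r ∈ I) (hd : d ∈ I) (N : ℕ) :
    (τ ^ (N + 1)) d * orbitProd τ r N ∈ I := by
  induction N with
  | zero => simpa [orbitProd_zero] using hI d hd
  | succ N ih =>
    have h := hI _ ih
    rwa [map_mul, mul_assoc, mul_comm (τ (orbitProd τ r N)) r, ← orbitProd_succ',
      ← RingAut.mul_apply, ← pow_succ'] at h

end CommRing

section PrincipalIdealDomain

variable {R : Type*} [CommRing R] [IsDomain R] [IsPrincipalIdealRing R]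
  {σ : R ≃+* R}

lemma NoPeriodicIrreducibles.eventually_isCoprime_of_prime (hσ : NoPeriodicIrreducibles σ)
    {a y : R} (ha : Prime a) (hy : y ≠ 0) : ∀ᶠ m in atTop, IsCoprime a ((σ ^ m) y) := by
  induction y using induction_on_prime with
  | h₁ => exact absurd rfl hy
  | h₂ u hu => exact .of_forall fun m => ⟨0, ((hu.map (σ ^ m)).unit⁻¹ : Rˣ), by simp⟩
  | h₃ y b hy0 hb ih =>
    rw [← Nat.cofinite_eq_atTop] at ih ⊢
    have hfin := (hσ.subsingleton_dvd ha.irreducible hb.irreducible).finite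
    filter_upwards [ih hy0, hfin.eventually_cofinite_notMem] with m hcop hndvd
    rw [map_mul, IsCoprime.mul_right_iff]
    exact ⟨(Prime.coprime_iff_not_dvd ha).2 hndvd, hcop⟩

theorem NoPeriodicIrreducibles.eventually_isCoprime (hσ : NoPeriodicIrreducibles σ)
    {x y : R} (hx : x ≠ 0) (hy : y ≠ 0) : ∀ᶠ m in atTop, IsCoprime x ((σ ^ m) y) := by
  induction x using induction_on_prime with
  | h₁ => exact absurd rfl hx
  | h₂ u hu => exact .of_forall fun m => ⟨(hu.unit⁻¹ : Rˣ), 0, by simp⟩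
  | h₃ x a hx0 ha ih =>
    filter_upwards [hσ.eventually_isCoprime_of_prime ha hy, ih hx0] with m hcop_a hcop_x
    exact hcop_a.mul_left hcop_x

end PrincipalIdealDomain

section OrbitIdeal

variable {R : Type*} [CommRing R] {σ : R ≃+* R} {p q : R}

def orbitIdeal (σ : R ≃+* R) (p q : R) (N : ℕ) : Ideal R :=
  Ideal.span {orbitProd σ⁻¹ p N, orbitProd σ q N}

lemma orbitProd_inv_mem_orbitIdeal (N : ℕ) : orbitProd σ⁻¹ p N ∈ orbitIdeal σ p q N :=
  Ideal.subset_span (Set.mem_insert _ _)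

lemma orbitProd_mem_orbitIdeal (N : ℕ) : orbitProd σ q N ∈ orbitIdeal σ p q N :=
  Ideal.subset_span (Set.mem_insert_of_mem _ rfl)

lemma mul_mem_orbitIdeal_of_mem_succ {N : ℕ} {i : R} (hi : i ∈ orbitIdeal σ p q (N + 1)) :
    σ⁻¹ i * p ∈ orbitIdeal σ p q N ∧ σ i * q ∈ orbitIdeal σ p q N := by
  have hπ := orbitProd_inv_mem_orbitIdeal (σ := σ) (p := p) (q := q) N
  have hκ := orbitProd_mem_orbitIdeal (σ := σ) (p := p) (q := q) N
  constructor
  · refine Ideal.apply_mul_mem_of_mem_span σ⁻¹ ?_ hi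
    rintro a (rfl | rfl)
    · rw [mul_comm, ← orbitProd_succ', orbitProd_succ, orbitProd_succ, mul_assoc]
      exact Ideal.mul_mem_right _ _ hπ
    · rw [orbitProd_succ', map_mul, RingAut.inv_apply_apply]
      exact Ideal.mul_mem_right _ _ (Ideal.mul_mem_left _ _ hκ)
  · refine Ideal.apply_mul_mem_of_mem_span σ ?_ hi
    rintro a (rfl | rfl)
    · rw [orbitProd_succ', map_mul, RingAut.apply_inv_apply]
      exact Ideal.mul_mem_right _ _ (Ideal.mul_mem_left _ _ hπ)
    · rw [mul_comm, ← orbitProd_succ', orbitProd_succ, orbitProd_succ, mul_assoc]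
      exact Ideal.mul_mem_right _ _ hκ

lemma orbitIdeal_le_succ {N : ℕ} (hcop : ∀ m ≥ N + 1, IsCoprime p ((σ ^ m) q)) :
    orbitIdeal σ p q N ≤ orbitIdeal σ p q (N + 1) := by
  rw [orbitIdeal, Ideal.span_le, Set.pair_subset_iff]
  constructor
  · have hcop' : IsCoprime ((σ⁻¹ ^ (N + 1)) p) (orbitProd σ q (N + 1)) :=
      IsCoprime.prod_right fun k _ => (hcop (N + 1 + k) (by omega)).inv_pow_apply
    refine Ideal.mem_of_isCoprime_of_mul_mem hcop' ?_
      (Ideal.mul_mem_right _ _ (orbitProd_mem_orbitIdeal (N + 1)))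
    rw [mul_comm, ← orbitProd_succ]
    exact orbitProd_inv_mem_orbitIdeal (N + 1)
  · have hcop' : IsCoprime ((σ ^ (N + 1)) q) (orbitProd σ⁻¹ p (N + 1)) :=
      IsCoprime.prod_right fun k _ => (hcop (k + (N + 1)) (by omega)).inv_pow_apply.symm
    refine Ideal.mem_of_isCoprime_of_mul_mem hcop' ?_
      (Ideal.mul_mem_right _ _ (orbitProd_inv_mem_orbitIdeal (N + 1)))
    rw [mul_comm, ← orbitProd_succ]
    exact orbitProd_mem_orbitIdeal (N + 1)

end OrbitIdeal

section Minimality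

variable {R : Type*} [CommRing R] [IsDomain R] [IsPrincipalIdealRing R] {σ : R ≃+* R}

lemma NoPeriodicIrreducibles.eventually_orbitProd_mem (hσ : NoPeriodicIrreducibles σ)
    {r d : R} {I : Ideal R} (hI : ∀ i ∈ I, σ i * r ∈ I) (hd : d ∈ I) (hd0 : d ≠ 0) :
    ∀ᶠ N in atTop, orbitProd σ r N ∈ I := by
  filter_upwards [(tendsto_add_atTop_nat 1).eventually (hσ.eventually_isCoprime hd0 hd0)]
    with N hcop
  exact Ideal.mem_of_isCoprime_of_mul_mem hcop (I.mul_mem_right _ hd)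
    (pow_apply_mul_orbitProd_mem hI hd N)

lemma NoPeriodicIrreducibles.eventually_orbitIdeal_le (hσ : NoPeriodicIrreducibles σ)
    {p q : R} {I : Ideal R} (hI : PQInvariant σ p q I) (hI0 : I ≠ ⊥) :
    ∀ᶠ N in atTop, orbitIdeal σ p q N ≤ I := by
  obtain ⟨d, hd, hd0⟩ := Submodule.exists_mem_ne_zero_of_ne_bot hI0
  filter_upwards [hσ.inv.eventually_orbitProd_mem (fun i hi => (hI i hi).1) hd hd0,
    hσ.eventually_orbitProd_mem (fun i hi => (hI i hi).2) hd hd0] with N hπ hκ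
  rw [orbitIdeal, Ideal.span_le, Set.pair_subset_iff]
  exact ⟨hπ, hκ⟩

end Minimality

/-- Over a PID with all `σ`-orbits of irreducibles infinite, the
rank-one `R`-free module `V_p` has a unique simple submodule (its socle): there is a
nonzero `(p,q)`-invariant ideal contained in every nonzero `(p,q)`-invariant ideal. -/
theorem stmt_10 {R : Type*} [CommRing R] [IsDomain R] [IsPrincipalIdealRing R]
    (σ : R ≃+* R)
    (horb : ∀ z : R, Irreducible z → ∀ n : ℕ, 1 ≤ n → ¬ Associated ((σ ^ n) z) z)
    (p q : R) (hp : p ≠ 0) (hq : q ≠ 0) :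
    ∃ J : Ideal R, J ≠ ⊥ ∧ PQInvariant σ p q J ∧
      ∀ I : Ideal R, PQInvariant σ p q I → I ≠ ⊥ → J ≤ I := by
  have hσ : NoPeriodicIrreducibles σ := horb
  obtain ⟨N₀, hN₀⟩ := eventually_atTop.1 (hσ.eventually_isCoprime hp hq)
  have hmono : MonotoneOn (orbitIdeal σ p q) (Set.Ici N₀) :=
    monotoneOn_nat_Ici_of_le_succ fun N hN => orbitIdeal_le_succ fun m hm => hN₀ m (by omega)
  refine ⟨orbitIdeal σ p q N₀, ?_, fun i hi => ?_, fun I hI hI0 => ?_⟩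
  · exact (Submodule.ne_bot_iff _).2
      ⟨_, orbitProd_mem_orbitIdeal N₀, orbitProd_ne_zero σ hq N₀⟩
  · exact mul_mem_orbitIdeal_of_mem_succ
      (hmono Set.self_mem_Ici (Set.mem_Ici.2 N₀.le_succ) N₀.le_succ hi)
  · obtain ⟨N, hN, hNI⟩ :=
      ((eventually_ge_atTop N₀).and (hσ.eventually_orbitIdeal_le hI hI0)).exists
    exact (hmono Set.self_mem_Ici hN hN).trans hNI
end
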